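/- Let m ≥ 1, let F_i, F_j ∈ ℝ^{m×2}, and set G_i = F_i F_iᵀ and G_j = F_j F_jᵀ (both m×m real positive semi-definite). Then tr( ( G_i^{1/2} G_j G_i^{1/2} )^{1/2} ) = √(‖F_iᵀF_j‖_F² + 2·|det(F_iᵀF_j)|), i.e., it equals the sum of the two singular values of F_iᵀF_j. Here M^{1/2} denotes the unique positive semi-definite square root of a positive semi-definite matrix M. -/

import Mathlib

/-! With `S = G_i^{1/2}` and `B = S F_j`, the middle matrix is `B Bᵀ`, while `Bᵀ B = Aᵀ A` for
`A = F_iᵀ F_j` because `S² = F_i F_iᵀ`. The matrices `B Bᵀ` and `Bᵀ B` have the same nonzero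
eigenvalues, so their square roots have the same trace, and the left-hand side is `tr X` with
`X = (Aᵀ A)^{1/2}`. For a `2 × 2` matrix, `tr (X²) = (tr X)² - 2 det X`; as `X ≥ 0` and
`det X = |det A|`, this reads `(tr X)² = ‖A‖_F² + 2 |det A|`. -/

open Matrix

/-- The Frobenius norm of a real matrix. -/
noncomputable def frobNorm {m n : ℕ} (A : Matrix (Fin m) (Fin n) ℝ) : ℝ :=
  Real.sqrt (Matrix.trace (Aᵀ * A))

open scoped ComplexOrder in
/-- The positive semidefinite square root of a positive semidefinite matrix
(definition of `Matrix.PosSemidef.sqrt` from the older Mathlib, removed since). -/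
noncomputable def Matrix.PosSemidef.sqrt {n 𝕜 : Type*} [Fintype n] [RCLike 𝕜] [DecidableEq n]
    {A : Matrix n n 𝕜} (hA : A.PosSemidef) : Matrix n n 𝕜 :=
  hA.1.eigenvectorUnitary.1 * diagonal ((↑) ∘ (√·) ∘ hA.1.eigenvalues) *
  (star hA.1.eigenvectorUnitary : Matrix n n 𝕜)

section

variable {m n : Type*} [Fintype m] [Fintype n] [DecidableEq m] [DecidableEq n]

open scoped ComplexOrder in
theorem Matrix.PosSemidef.sqrt_eq_cfc {𝕜 : Type*} [RCLike 𝕜] {A : Matrix n n 𝕜}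
    (hA : A.PosSemidef) :
    hA.sqrt = cfc Real.sqrt A := by
  rw [hA.1.cfc_eq, IsHermitian.cfc, Unitary.conjStarAlgAut_apply]
  rfl

open scoped MatrixOrder in
theorem Matrix.PosSemidef.cfc_sqrt_mul_self {A : Matrix n n ℝ} (hA : A.PosSemidef) :
    cfc Real.sqrt A * cfc Real.sqrt A = A := by
  have hA' : 0 ≤ A := nonneg_iff_posSemidef.mpr hA
  conv_rhs => rw [← cfc_id' ℝ A]
  rw [← cfc_mul Real.sqrt Real.sqrt A]
  exact cfc_congr fun x hx ↦ Real.mul_self_sqrt (spectrum_nonneg_of_nonneg hA' hx)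

open scoped MatrixOrder in
theorem Matrix.posSemidef_cfc_sqrt (A : Matrix n n ℝ) : (cfc Real.sqrt A).PosSemidef :=
  nonneg_iff_posSemidef.mp (cfc_nonneg fun x _ ↦ Real.sqrt_nonneg x)

theorem Matrix.IsHermitian.trace_cfc_eq_sum_roots {A : Matrix n n ℝ} (hA : A.IsHermitian)
    (f : ℝ → ℝ) :
    trace (cfc f A) = (A.charpoly.roots.map f).sum := by
  rw [hA.cfc_eq, IsHermitian.cfc, Unitary.conjStarAlgAut_apply, trace_mul_cycle,
    Unitary.coe_star_mul_self, one_mul, trace_diagonal, hA.roots_charpoly_eq_eigenvalues]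
  simp

theorem Matrix.trace_cfc_mul_transpose_comm (B : Matrix m n ℝ) {f : ℝ → ℝ} (hf : f 0 = 0) :
    trace (cfc f (B * Bᵀ)) = trace (cfc f (Bᵀ * B)) := by
  have hBBt : (B * Bᵀ).IsHermitian := by
    simpa using isHermitian_mul_conjTranspose_self B
  have hBtB : (Bᵀ * B).IsHermitian := by
    simpa using isHermitian_conjTranspose_mul_self B
  -- `X ^ n * χ(B Bᵀ) = X ^ m * χ(Bᵀ B)`: the spectra differ only in zeros, which `f` kills.
  have hroots := congrArg Polynomial.roots (charpoly_mul_comm' B Bᵀ)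
  rw [Polynomial.roots_mul ((Polynomial.monic_X_pow _).mul (charpoly_monic _)).ne_zero,
    Polynomial.roots_mul ((Polynomial.monic_X_pow _).mul (charpoly_monic _)).ne_zero,
    Polynomial.roots_X_pow, Polynomial.roots_X_pow] at hroots
  have hsum := congrArg (fun s => (s.map f).sum) hroots
  simp only [Multiset.map_add, Multiset.sum_add, Multiset.map_nsmul, Multiset.sum_nsmul,
    Multiset.map_singleton, Multiset.sum_singleton, hf, smul_zero, zero_add] at hsum
  rw [hBBt.trace_cfc_eq_sum_roots, hBtB.trace_cfc_eq_sum_roots, hsum]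

theorem Matrix.trace_mul_self_fin_two {R : Type*} [CommRing R] (X : Matrix (Fin 2) (Fin 2) R) :
    trace (X * X) = trace X ^ 2 - 2 * det X := by
  simp only [trace_fin_two, det_fin_two, mul_apply, Fin.sum_univ_two]
  ring

theorem Matrix.PosSemidef.trace_cfc_sqrt_fin_two {C : Matrix (Fin 2) (Fin 2) ℝ}
    (hC : C.PosSemidef) :
    trace (cfc Real.sqrt C) = √(trace C + 2 * √(det C)) := by
  set X := cfc Real.sqrt C
  have hX : X.PosSemidef := posSemidef_cfc_sqrt C
  have hXX : X * X = C := hC.cfc_sqrt_mul_self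
  have hdet : √(det C) = det X := by
    rw [← hXX, det_mul, Real.sqrt_mul_self hX.det_nonneg]
  rw [hdet, ← hXX, trace_mul_self_fin_two, sub_add_cancel, Real.sqrt_sq hX.trace_nonneg]

end

theorem frobNorm_sq {m n : ℕ} (A : Matrix (Fin m) (Fin n) ℝ) :
    frobNorm A ^ 2 = trace (Aᵀ * A) := by
  refine Real.sq_sqrt (PosSemidef.trace_nonneg ?_)
  simpa using posSemidef_conjTranspose_mul_self A

theorem stmt11_general (m : ℕ) (Fi Fj : Matrix (Fin m) (Fin 2) ℝ)
    (hGi : (Fi * Fiᵀ).PosSemidef)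
    (hMid : (hGi.sqrt * (Fj * Fjᵀ) * hGi.sqrt).PosSemidef) :
    Matrix.trace hMid.sqrt
      = Real.sqrt ((frobNorm (Fiᵀ * Fj)) ^ 2 + 2 * |(Fiᵀ * Fj).det|) := by
  set S := hGi.sqrt
  have hS : S = cfc Real.sqrt (Fi * Fiᵀ) := hGi.sqrt_eq_cfc
  have hSt : Sᵀ = S := by
    rw [hS]
    simpa using (posSemidef_cfc_sqrt (Fi * Fiᵀ)).1.eq
  have hMid_eq : S * (Fj * Fjᵀ) * S = (S * Fj) * (S * Fj)ᵀ := by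
    rw [transpose_mul, hSt]
    simp only [Matrix.mul_assoc]
  have hGram : (S * Fj)ᵀ * (S * Fj) = (Fiᵀ * Fj)ᵀ * (Fiᵀ * Fj) := by
    rw [transpose_mul, hSt, transpose_mul, transpose_transpose, Matrix.mul_assoc,
      ← Matrix.mul_assoc S S, hS, hGi.cfc_sqrt_mul_self]
    simp only [Matrix.mul_assoc]
  have hC : ((Fiᵀ * Fj)ᵀ * (Fiᵀ * Fj)).PosSemidef := by
    simpa using posSemidef_conjTranspose_mul_self (Fiᵀ * Fj)
  rw [hMid.sqrt_eq_cfc, hMid_eq, trace_cfc_mul_transpose_comm _ Real.sqrt_zero, hGram,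
    hC.trace_cfc_sqrt_fin_two, frobNorm_sq, det_mul, det_transpose, ← sq, Real.sqrt_sq_eq_abs]

/-- For Gram matrices `G_i = F_i F_iᵀ` and `G_j = F_j F_jᵀ`,
`tr((G_i^{1/2} G_j G_i^{1/2})^{1/2}) = √(‖F_iᵀF_j‖_F² + 2|det(F_iᵀF_j)|)`,
the sum of the two singular values of `F_iᵀF_j`. Here `M^{1/2}` is the unique
positive semi-definite square root. -/
theorem stmt11 (m : ℕ) (hm : 1 ≤ m) (Fi Fj : Matrix (Fin m) (Fin 2) ℝ)
    (hGi : (Fi * Fiᵀ).PosSemidef)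
    (hMid : (hGi.sqrt * (Fj * Fjᵀ) * hGi.sqrt).PosSemidef) :
    Matrix.trace hMid.sqrt
      = Real.sqrt ((frobNorm (Fiᵀ * Fj)) ^ 2 + 2 * |(Fiᵀ * Fj).det|) :=
  stmt11_general m Fi Fj hGi hMid
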